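/- Let $p \geq 2$ be real. Then for all real numbers $a, b$, we have $|b|^p - |a|^p \geq p|a|^{p-2} a (b-a) + 2^{1-p} |a-b|^p$ (with the convention $|a|^{p-2}a = 0$ when $a = 0$). -/

import Mathlib

/-!
Apply the tangent-line inequality of the convex `C¹` function `|x| ^ p` at `a` to the midpoint
`(a + b) / 2`, and bound `|(a + b) / 2| ^ p` from above by Clarkson's inequality
`|(a + b) / 2| ^ p + |(a - b) / 2| ^ p ≤ (|a| ^ p + |b| ^ p) / 2`. Writing `|x| ^ p = (x ^ 2) ^ (p / 2)`,
Clarkson's inequality follows from superadditivity and convexity of `t ↦ t ^ (p / 2)` on `[0, ∞)`,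
together with the parallelogram law `((a + b) / 2) ^ 2 + ((a - b) / 2) ^ 2 = (a ^ 2 + b ^ 2) / 2`.
-/

open Real Set

theorem ConvexOn.add_mul_sub_le_of_hasDerivAt {S : Set ℝ} {f : ℝ → ℝ} {f' x y : ℝ}
    (hf : ConvexOn ℝ S f) (hx : x ∈ S) (hy : y ∈ S) (hf' : HasDerivAt f f' x) :
    f x + f' * (y - x) ≤ f y := by
  rcases lt_trichotomy x y with hxy | rfl | hyx
  · have h := hf.le_slope_of_hasDerivAt hx hy hxy hf'
    rw [slope_def_field, le_div_iff₀ (sub_pos.2 hxy)] at h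
    linarith
  · simp
  · have h := hf.slope_le_of_hasDerivAt hy hx hyx hf'
    rw [slope_def_field, div_le_iff₀ (sub_pos.2 hyx)] at h
    linarith

theorem convexOn_abs_rpow {p : ℝ} (hp : 1 ≤ p) : ConvexOn ℝ univ fun x : ℝ ↦ |x| ^ p := by
  have himage : (|·|) '' univ = Ici (0 : ℝ) := by
    ext t
    simp only [image_univ, mem_range, mem_Ici]
    exact ⟨by rintro ⟨x, rfl⟩; exact abs_nonneg x, fun ht ↦ ⟨t, abs_of_nonneg ht⟩⟩
  refine ConvexOn.comp (g := fun t : ℝ ↦ t ^ p) ?_ convexOn_univ_norm ?_ <;> rw [himage]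
  · exact convexOn_rpow hp
  · exact monotoneOn_rpow_Ici_of_exponent_nonneg (by linarith)

theorem abs_rpow_add_mul_sub_le {p : ℝ} (hp : 1 < p) (x y : ℝ) :
    |x| ^ p + p * |x| ^ (p - 2) * x * (y - x) ≤ |y| ^ p :=
  (convexOn_abs_rpow hp.le).add_mul_sub_le_of_hasDerivAt (mem_univ x) (mem_univ y)
    (hasDerivAt_abs_rpow x hp)

theorem abs_rpow_eq_sq_rpow_div_two (x p : ℝ) : |x| ^ p = (x ^ 2) ^ (p / 2) := by
  rw [← sq_abs, ← rpow_natCast, ← rpow_mul (abs_nonneg x)]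
  ring_nf

theorem clarkson_abs_rpow {p : ℝ} (hp : 2 ≤ p) (a b : ℝ) :
    |(a + b) / 2| ^ p + |(a - b) / 2| ^ p ≤ (|a| ^ p + |b| ^ p) / 2 := by
  have hr : 1 ≤ p / 2 := by linarith
  simp only [abs_rpow_eq_sq_rpow_div_two _ p]
  calc (((a + b) / 2) ^ 2) ^ (p / 2) + (((a - b) / 2) ^ 2) ^ (p / 2)
      ≤ (((a + b) / 2) ^ 2 + ((a - b) / 2) ^ 2) ^ (p / 2) :=
        add_rpow_le_rpow_add (sq_nonneg _) (sq_nonneg _) hr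
    _ = ((1 / 2 : ℝ) • a ^ 2 + (1 / 2 : ℝ) • b ^ 2) ^ (p / 2) := by
        congr 1; simp only [smul_eq_mul]; ring
    _ ≤ (1 / 2 : ℝ) • (a ^ 2) ^ (p / 2) + (1 / 2 : ℝ) • (b ^ 2) ^ (p / 2) :=
        (convexOn_rpow hr).2 (sq_nonneg a) (sq_nonneg b) (by norm_num) (by norm_num) (by norm_num)
    _ = ((a ^ 2) ^ (p / 2) + (b ^ 2) ^ (p / 2)) / 2 := by simp only [smul_eq_mul]; ring

theorem abs_div_two_rpow (p x : ℝ) :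
    |x / 2| ^ p = (2 : ℝ) ^ (1 - p) * |x| ^ p / 2 := by
  rw [abs_div, abs_two, div_rpow (abs_nonneg _) zero_le_two, rpow_sub zero_lt_two, rpow_one]
  field_simp

/-- Lindqvist's convexity inequality: for real `p ≥ 2` and all real `a b`,
`|b|^p - |a|^p ≥ p |a|^(p-2) a (b - a) + 2^(1-p) |a - b|^p`. -/
theorem lindqvist_inequality (p : ℝ) (hp : 2 ≤ p) (a b : ℝ) :
    |b| ^ p - |a| ^ p ≥
      p * |a| ^ (p - 2) * a * (b - a) + (2 : ℝ) ^ (1 - p) * |a - b| ^ p := by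
  have tangent := abs_rpow_add_mul_sub_le (by linarith) a ((a + b) / 2)
  have clarkson := clarkson_abs_rpow hp a b
  rw [abs_div_two_rpow p (a - b)] at clarkson
  linarith
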